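/- Let m ≥ 2 and let y = Π ∘ f_m^II where Π(t,x,y,z) = (x,y,z)/(t + √(2t²+1)). Suppose (z_j) = (r_j e^{iθ_j}) is a sequence with r_j > 0, θ_j in a fixed sector Ω_k (so cos mθ_j has constant sign (−1)^k and is bounded away from 0), and r_j → 0 or r_j → ∞. Then the first two components of y(z_j) tend to 0 and the third component tends to one of ±(√2 − 1) or ±(√2 + 1); hence every limit point of the image of f_m^II on the boundary of D³ is one of the four points (0,0,±(√2−1)), (0,0,±(√2+1)). -/

import Mathlib

noncomputable def x0II (m : ℕ) (r θ : ℝ) : ℝ :=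
  ((1 - (m:ℝ)^2)/(4*m)) * (r + 1/r) * Real.cos (m*θ)

noncomputable def x3II (m : ℕ) (r θ : ℝ) : ℝ :=
  ((1 - (m:ℝ)^2)/(4*m)) * (r - 1/r) * Real.cos (m*θ)

noncomputable def x1II (m : ℕ) (θ : ℝ) : ℝ :=
  -((((m:ℝ)^2 + 1) * Real.cos (m*θ) * Real.cos θ
     + 2*(m:ℝ) * Real.sin (m*θ) * Real.sin θ) / (2*m))

noncomputable def x2II (m : ℕ) (θ : ℝ) : ℝ :=
  -((((m:ℝ)^2 + 1) * Real.cos (m*θ) * Real.sin θ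
     - 2*(m:ℝ) * Real.sin (m*θ) * Real.cos θ) / (2*m))

/-- The hollowball projection Π. -/
noncomputable def hollowPi (p : ℝ × ℝ × ℝ × ℝ) : ℝ × ℝ × ℝ :=
  (p.2.1 / (p.1 + Real.sqrt (2*p.1^2 + 1)),
   p.2.2.1 / (p.1 + Real.sqrt (2*p.1^2 + 1)),
   p.2.2.2 / (p.1 + Real.sqrt (2*p.1^2 + 1)))

/-!
With `D(t) = t + √(2t² + 1)` we have `y = (x₁, x₂, x₃) / D(x₀)`. On the sector `Ω_k` the sign of
`cos mθ` is `(-1)^k`, so `x₀ = ((1 - m²)/(4m)) (r + 1/r) cos mθ` tends to `+∞` or to `-∞` (according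
to the parity of `k`) as `r → 0` or `r → ∞`. Since `D(t) = t (1 ± √(2 + 1/t²))` for `±t > 0`,
`D(x₀) → ∞` kills the bounded `x₁, x₂`, and `x₀ / D(x₀)` tends to `√2 - 1` or `-(√2 + 1)`.
Finally `x₃ = ((r - 1/r)/(r + 1/r)) x₀`, where the ratio tends to `-1` or `1`.
-/

open Filter Topology Real

noncomputable def hollowDenom (t : ℝ) : ℝ := t + √(2 * t ^ 2 + 1)

lemma hollowPi_eq (t x y z : ℝ) :
    hollowPi (t, x, y, z) = (x / hollowDenom t, y / hollowDenom t, z / hollowDenom t) := rfl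

lemma hollowDenom_eq_mul_of_pos {t : ℝ} (ht : 0 < t) :
    hollowDenom t = t * (1 + √(2 + (1 / t) ^ 2)) := by
  have : √(2 * t ^ 2 + 1) = t * √(2 + (1 / t) ^ 2) := by
    rw [← sqrt_sq ht.le, ← sqrt_mul (sq_nonneg t), sqrt_sq ht.le]
    congr 1; field_simp
  rw [hollowDenom, this]; ring

lemma hollowDenom_eq_mul_of_neg {t : ℝ} (ht : t < 0) :
    hollowDenom t = t * (1 - √(2 + (1 / t) ^ 2)) := by
  have : √(2 * t ^ 2 + 1) = -t * √(2 + (1 / t) ^ 2) := by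
    rw [← sqrt_sq (neg_nonneg.2 ht.le), ← sqrt_mul (sq_nonneg _)]
    have := ht.ne
    congr 1; field_simp
  rw [hollowDenom, this]; ring

lemma tendsto_sqrt_two_add_one_div_sq {l : Filter ℝ} (h : Tendsto (fun t => 1 / t) l (𝓝 0)) :
    Tendsto (fun t => √(2 + (1 / t) ^ 2)) l (𝓝 √2) := by
  simpa using ((h.pow 2).const_add 2).sqrt

lemma one_lt_sqrt_two_add_sq (u : ℝ) : 1 < √(2 + u ^ 2) := by
  rw [lt_sqrt zero_le_one]; nlinarith [sq_nonneg u]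

lemma tendsto_div_hollowDenom_atTop :
    Tendsto (fun t => t / hollowDenom t) atTop (𝓝 (√2 - 1)) := by
  have hsqrt := tendsto_sqrt_two_add_one_div_sq (by simpa using tendsto_inv_atTop_zero)
  have hlim : Tendsto (fun t : ℝ => 1 / (1 + √(2 + (1 / t) ^ 2))) atTop (𝓝 (1 / (1 + √2))) :=
    tendsto_const_nhds.div (hsqrt.const_add 1) (by positivity)
  have h1 : 1 / (1 + √2) = √2 - 1 := by
    rw [div_eq_iff (by positivity)]; ring_nf; norm_num
  rw [← h1]
  refine hlim.congr' ?_
  filter_upwards [eventually_gt_atTop 0] with t ht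
  rw [hollowDenom_eq_mul_of_pos ht, div_mul_cancel_left₀ ht.ne', one_div]

lemma tendsto_div_hollowDenom_atBot :
    Tendsto (fun t => t / hollowDenom t) atBot (𝓝 (-(√2 + 1))) := by
  have hsqrt := tendsto_sqrt_two_add_one_div_sq (by simpa using tendsto_inv_atBot_zero)
  have hne : 1 - √2 ≠ 0 := by
    simpa using (sub_neg.2 (one_lt_sqrt_two_add_sq 0)).ne
  have hlim : Tendsto (fun t : ℝ => 1 / (1 - √(2 + (1 / t) ^ 2))) atBot (𝓝 (1 / (1 - √2))) :=
    tendsto_const_nhds.div (hsqrt.const_sub 1) hne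
  have h1 : 1 / (1 - √2) = -(√2 + 1) := by
    rw [div_eq_iff hne]; ring_nf; norm_num
  rw [← h1]
  refine hlim.congr' ?_
  filter_upwards [eventually_lt_atBot 0] with t ht
  rw [hollowDenom_eq_mul_of_neg ht, div_mul_cancel_left₀ ht.ne, one_div]

lemma exists_tendsto_div_hollowDenom {ι : Type*} {l : Filter ι} {t : ι → ℝ}
    (ht : Tendsto t l atBot ∨ Tendsto t l atTop) :
    ∃ L, (L = -(√2 + 1) ∨ L = √2 - 1) ∧
      Tendsto (fun i => t i / hollowDenom (t i)) l (𝓝 L) ∧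
      Tendsto (fun i => 1 / hollowDenom (t i)) l (𝓝 0) := by
  rcases ht with ht | ht
  · refine ⟨_, .inl rfl, tendsto_div_hollowDenom_atBot.comp ht, ?_⟩
    refine ((tendsto_div_hollowDenom_atBot.div_atBot tendsto_id).comp ht).congr' ?_
    filter_upwards [ht.eventually_lt_atBot 0] with i hi
    simp [div_div_cancel_left' hi.ne]
  · refine ⟨_, .inr rfl, tendsto_div_hollowDenom_atTop.comp ht, ?_⟩
    refine ((tendsto_div_hollowDenom_atTop.div_atTop tendsto_id).comp ht).congr' ?_
    filter_upwards [ht.eventually_gt_atTop 0] with i hi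
    simp [div_div_cancel_left' hi.ne']

lemma tendsto_div_zero_of_abs_le {ι : Type*} {l : Filter ι} {p d : ι → ℝ} {B : ℝ}
    (hp : ∀ i, |p i| ≤ B) (hd : Tendsto (fun i => 1 / d i) l (𝓝 0)) :
    Tendsto (fun i => p i / d i) l (𝓝 0) := by
  simpa [div_eq_inv_mul] using hd.zero_mul_isBoundedUnder_le (isBoundedUnder_of ⟨B, hp⟩)

lemma sub_one_div_div_add_one_div {r : ℝ} (hr : r ≠ 0) :
    (r - 1 / r) / (r + 1 / r) = 1 - 2 / (r ^ 2 + 1) := by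
  field_simp
  ring

lemma tendsto_add_one_div_nhdsGT_zero : Tendsto (fun r : ℝ => r + 1 / r) (𝓝[>] 0) atTop := by
  refine tendsto_atTop_add_left_of_le' _ 0 ?_ (tendsto_inv_nhdsGT_zero.congr fun r => (one_div r).symm)
  filter_upwards [self_mem_nhdsWithin] with r hr using (Set.mem_Ioi.1 hr).le

lemma tendsto_add_one_div_atTop : Tendsto (fun r : ℝ => r + 1 / r) atTop atTop := by
  refine tendsto_atTop_add_right_of_le' _ 0 tendsto_id ?_
  filter_upwards [eventually_gt_atTop 0] with r hr using by positivity

lemma tendsto_sub_one_div_div_add_one_div_nhdsGT_zero :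
    Tendsto (fun r : ℝ => (r - 1 / r) / (r + 1 / r)) (𝓝[>] 0) (𝓝 (-1)) := by
  have hcont : Continuous fun r : ℝ => 1 - 2 / (r ^ 2 + 1) :=
    continuous_const.sub (continuous_const.div (by fun_prop) fun r => by positivity)
  have := (hcont.tendsto 0).mono_left (nhdsWithin_le_nhds (s := Set.Ioi 0))
  norm_num at this
  refine this.congr' ?_
  filter_upwards [self_mem_nhdsWithin] with r hr
  exact (sub_one_div_div_add_one_div (ne_of_gt hr)).symm

lemma tendsto_sub_one_div_div_add_one_div_atTop :
    Tendsto (fun r : ℝ => (r - 1 / r) / (r + 1 / r)) atTop (𝓝 1) := by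
  have : Tendsto (fun r : ℝ => 1 - 2 / (r ^ 2 + 1)) atTop (𝓝 (1 - 0)) :=
    tendsto_const_nhds.sub (tendsto_const_nhds.div_atTop
      (tendsto_atTop_add_const_right _ 1 (tendsto_pow_atTop two_ne_zero)))
  rw [sub_zero] at this
  refine this.congr' ?_
  filter_upwards [eventually_gt_atTop 0] with r hr
  exact (sub_one_div_div_add_one_div hr.ne').symm

lemma neg_one_pow_mul_cos_pos {m θ : ℝ} {k : ℕ} (hm : 0 < m)
    (h₁ : (2 * k - 1) * π / (2 * m) < θ) (h₂ : θ < (2 * k + 1) * π / (2 * m)) :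
    0 < (-1) ^ k * cos (m * θ) := by
  rw [div_lt_iff₀ (by positivity)] at h₁
  rw [lt_div_iff₀ (by positivity)] at h₂
  have hcos : cos (m * θ) = (-1) ^ k * cos (m * θ - k * π) := by
    rw [← cos_add_nat_mul_pi, sub_add_cancel]
  rw [hcos, ← mul_assoc, ← pow_add, ← two_mul, pow_mul, neg_one_sq, one_pow, one_mul]
  apply cos_pos_of_mem_Ioo
  constructor <;> linarith

lemma tendsto_x0II {ι : Type*} {l : Filter ι} {m k : ℕ} (hm : 2 ≤ m) {r θ : ι → ℝ} {ε : ℝ}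
    (hε : 0 < ε) (hu : Tendsto (fun i => r i + 1 / r i) l atTop)
    (hθ : ∀ i, (2 * (k : ℝ) - 1) * π / (2 * (m : ℝ)) < θ i ∧
      θ i < (2 * (k : ℝ) + 1) * π / (2 * (m : ℝ)))
    (hcos : ∀ i, ε ≤ |cos ((m : ℝ) * θ i)|) :
    Tendsto (fun i => x0II m (r i) (θ i)) l atBot ∨
      Tendsto (fun i => x0II m (r i) (θ i)) l atTop := by
  have hm' : (2 : ℝ) ≤ m := by exact_mod_cast hm
  set s : ℝ := (-1) ^ k with hs
  set a : ℝ := (1 - (m : ℝ) ^ 2) / (4 * m)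
  have hss : s * s = 1 := by rw [hs, ← pow_add, ← two_mul, pow_mul, neg_one_sq, one_pow]
  have hsa : a * s ≠ 0 :=
    mul_ne_zero (div_ne_zero (by nlinarith) (by positivity)) (pow_ne_zero _ (by norm_num))
  have hsc : ∀ i, ε ≤ s * cos (m * θ i) := fun i => by
    have hpos := neg_one_pow_mul_cos_pos (by positivity) (hθ i).1 (hθ i).2
    rw [← abs_of_pos hpos, abs_mul, abs_neg_one_pow, one_mul]
    exact hcos i
  have hv : Tendsto (fun i => s * cos (m * θ i) * (r i + 1 / r i)) l atTop := by
    refine tendsto_atTop_mono' l ?_ (hu.const_mul_atTop hε)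
    filter_upwards [hu.eventually_ge_atTop 0] with i hi
    exact mul_le_mul_of_nonneg_right (hsc i) hi
  have hx0 : ∀ i, x0II m (r i) (θ i) = a * s * (s * cos (m * θ i) * (r i + 1 / r i)) := fun i => by
    simp only [x0II]
    linear_combination (-(a * (r i + 1 / r i) * cos (m * θ i))) * hss
  simp only [hx0]
  rcases hsa.lt_or_gt with h | h
  · exact .inl (hv.const_mul_atTop_of_neg h)
  · exact .inr (hv.const_mul_atTop h)

lemma abs_mul_mul_le {A a b : ℝ} (hA : 0 ≤ A) (ha : |a| ≤ 1) (hb : |b| ≤ 1) :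
    |A * a * b| ≤ A := by
  rw [abs_mul, abs_mul, abs_of_nonneg hA]
  calc A * |a| * |b| ≤ A * 1 * 1 := by gcongr
    _ = A := by ring

lemma abs_x1II_le (m : ℕ) (θ : ℝ) : |x1II m θ| ≤ ((m : ℝ) ^ 2 + 1 + 2 * m) / (2 * m) := by
  rw [x1II, abs_neg, abs_div, abs_of_nonneg (by positivity : (0 : ℝ) ≤ 2 * m)]
  gcongr
  exact (abs_add_le _ _).trans <| add_le_add
    (abs_mul_mul_le (by positivity) (abs_cos_le_one _) (abs_cos_le_one _))
    (abs_mul_mul_le (by positivity) (abs_sin_le_one _) (abs_sin_le_one _))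

lemma abs_x2II_le (m : ℕ) (θ : ℝ) : |x2II m θ| ≤ ((m : ℝ) ^ 2 + 1 + 2 * m) / (2 * m) := by
  rw [x2II, abs_neg, abs_div, abs_of_nonneg (by positivity : (0 : ℝ) ≤ 2 * m)]
  gcongr
  exact (abs_sub _ _).trans <| add_le_add
    (abs_mul_mul_le (by positivity) (abs_cos_le_one _) (abs_sin_le_one _))
    (abs_mul_mul_le (by positivity) (abs_sin_le_one _) (abs_cos_le_one _))

lemma x3II_eq_mul_x0II (m : ℕ) {r : ℝ} (hr : 0 < r) (θ : ℝ) :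
    x3II m r θ = (r - 1 / r) / (r + 1 / r) * x0II m r θ := by
  have : r + 1 / r ≠ 0 := by positivity
  simp only [x3II, x0II]
  field_simp

open Filter in
theorem stmt19_general (m k : ℕ) (hm : 2 ≤ m)
    (r θ : ℕ → ℝ) (hr0 : ∀ j, 0 < r j)
    (hθ : ∀ j, (2*(k:ℝ) - 1) * Real.pi / (2*(m:ℝ)) < θ j ∧
               θ j < (2*(k:ℝ) + 1) * Real.pi / (2*(m:ℝ)))
    (hsep : ∃ ε > 0, ∀ j, ε ≤ |Real.cos ((m:ℝ) * θ j)|)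
    (hlim : Tendsto r atTop (nhds 0) ∨ Tendsto r atTop atTop) :
    Tendsto (fun j => (hollowPi (x0II m (r j) (θ j), x1II m (θ j),
                                 x2II m (θ j), x3II m (r j) (θ j))).1)
      atTop (nhds 0) ∧
    Tendsto (fun j => (hollowPi (x0II m (r j) (θ j), x1II m (θ j),
                                 x2II m (θ j), x3II m (r j) (θ j))).2.1)
      atTop (nhds 0) ∧
    ∃ c : ℝ, (c = Real.sqrt 2 - 1 ∨ c = -(Real.sqrt 2 - 1) ∨
              c = Real.sqrt 2 + 1 ∨ c = -(Real.sqrt 2 + 1)) ∧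
      Tendsto (fun j => (hollowPi (x0II m (r j) (θ j), x1II m (θ j),
                                   x2II m (θ j), x3II m (r j) (θ j))).2.2)
        atTop (nhds c) := by
  obtain ⟨ε, hε, hcos⟩ := hsep
  obtain ⟨S, hS, hσ, hu⟩ : ∃ S : ℝ, (S = -1 ∨ S = 1) ∧
      Tendsto (fun j => (r j - 1 / r j) / (r j + 1 / r j)) atTop (𝓝 S) ∧
      Tendsto (fun j => r j + 1 / r j) atTop atTop := by
    rcases hlim with h | h
    · have h' : Tendsto r atTop (𝓝[>] 0) := tendsto_nhdsWithin_iff.2 ⟨h, .of_forall hr0⟩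
      exact ⟨-1, .inl rfl, tendsto_sub_one_div_div_add_one_div_nhdsGT_zero.comp h',
        tendsto_add_one_div_nhdsGT_zero.comp h'⟩
    · exact ⟨1, .inr rfl, tendsto_sub_one_div_div_add_one_div_atTop.comp h,
        tendsto_add_one_div_atTop.comp h⟩
  obtain ⟨L, hL, hdiv, hinv⟩ := exists_tendsto_div_hollowDenom (tendsto_x0II hm hε hu hθ hcos)
  simp only [hollowPi_eq]
  refine ⟨tendsto_div_zero_of_abs_le (fun j => abs_x1II_le m (θ j)) hinv,
    tendsto_div_zero_of_abs_le (fun j => abs_x2II_le m (θ j)) hinv, S * L, ?_, ?_⟩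
  · rcases hS with rfl | rfl <;> rcases hL with rfl | rfl <;> norm_num
  · exact (hσ.mul hdiv).congr fun j => by rw [x3II_eq_mul_x0II m (hr0 j), mul_div_assoc]

open Filter in
/-- along any sequence staying in a fixed sector Ω_k (with
cos mθ_j bounded away from 0) with r_j → 0 or r_j → ∞, the first two
components of y = Π ∘ f_m^II tend to 0 and the third tends to one of
±(√2 − 1), ±(√2 + 1). -/
theorem stmt19 (m k : ℕ) (hm : 2 ≤ m) (hk : k < 2*m)
    (r θ : ℕ → ℝ) (hr0 : ∀ j, 0 < r j)
    (hθ : ∀ j, (2*(k:ℝ) - 1) * Real.pi / (2*(m:ℝ)) < θ j ∧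
               θ j < (2*(k:ℝ) + 1) * Real.pi / (2*(m:ℝ)))
    (hsep : ∃ ε > 0, ∀ j, ε ≤ |Real.cos ((m:ℝ) * θ j)|)
    (hlim : Tendsto r atTop (nhds 0) ∨ Tendsto r atTop atTop) :
    Tendsto (fun j => (hollowPi (x0II m (r j) (θ j), x1II m (θ j),
                                 x2II m (θ j), x3II m (r j) (θ j))).1)
      atTop (nhds 0) ∧
    Tendsto (fun j => (hollowPi (x0II m (r j) (θ j), x1II m (θ j),
                                 x2II m (θ j), x3II m (r j) (θ j))).2.1)
      atTop (nhds 0) ∧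
    ∃ c : ℝ, (c = Real.sqrt 2 - 1 ∨ c = -(Real.sqrt 2 - 1) ∨
              c = Real.sqrt 2 + 1 ∨ c = -(Real.sqrt 2 + 1)) ∧
      Tendsto (fun j => (hollowPi (x0II m (r j) (θ j), x1II m (θ j),
                                   x2II m (θ j), x3II m (r j) (θ j))).2.2)
        atTop (nhds c) :=
  stmt19_general m k hm r θ hr0 hθ hsep hlim
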